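/- arXiv:1011.4830 — 3 statements merged into one kernel-verified Lean document; each statement's English description precedes it below -/
import Mathlib

section
/- Let B be a real number. There exists R > 0 such that for all complex u with Re(u) > 0 and |u| ≥ R, the partial derivative with respect to y = Im(u) (for y > 0) of Re(√u · log u + B·√u) is positive; consequently Re(√u log u + B√u) is increasing in |Im(u)| on {Re(u) > 0, |u| ≥ R}. -/
open Complex

/-!
Write `w = √u` and `L = log ‖u‖ + B + 2`. The derivative of `√u log u + B √u` is
`(log u + B + 2) / (2w)`, and along the vertical line `s ↦ x + s i` the derivative of the real
part is `-Im((log u + B + 2) / (2w))`, whose sign is that of `L · Im w - arg u · Re w`.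
Since `arg w = arg u / 2 ∈ (0, π/4)`, the inequality `φ < tan φ` gives `arg u · Re w < 2 Im w`,
so the derivative is positive as soon as `L ≥ 2`, that is for `‖u‖ ≥ exp (-B)`.
-/

theorem Real.mul_cos_lt_sin {φ : ℝ} (h0 : 0 < φ) (h1 : φ < Real.pi / 2) :
    φ * Real.cos φ < Real.sin φ := by
  have hcos : 0 < Real.cos φ := Real.cos_pos_of_mem_Ioo ⟨by linarith, h1⟩
  have htan := Real.lt_tan h0 h1
  rwa [Real.tan_eq_sin_div_cos, lt_div_iff₀ hcos] at htan

namespace Complex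

theorem arg_mul_re_cpow_half_lt {u : ℂ} (hre : 0 < u.re) (him : 0 < u.im) :
    arg u * (u ^ (1/2 : ℂ)).re < 2 * (u ^ (1/2 : ℂ)).im := by
  have harg_pos : 0 < arg u :=
    (arg_nonneg_iff.mpr him.le).lt_of_ne fun h ↦ him.ne' (arg_eq_zero_iff.mp h.symm).2
  have harg_lt : arg u < Real.pi / 2 := arg_lt_pi_div_two_iff.mpr (Or.inl hre)
  have hnorm : 0 < ‖u‖ ^ (1/2 : ℝ) := by
    have : u ≠ 0 := fun h ↦ by simp [h] at hre
    positivity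
  have hhalf : (1/2 : ℂ) = ((1/2 : ℝ) : ℂ) := by push_cast; rfl
  rw [hhalf, cpow_ofReal_re, cpow_ofReal_im]
  have := Real.mul_cos_lt_sin (φ := arg u * (1/2)) (by linarith) (by linarith)
  nlinarith

theorem hasDerivAt_cpow_half_mul_log_add (B : ℂ) {u : ℂ} (hu : u ∈ slitPlane) :
    HasDerivAt (fun z : ℂ => z ^ (1/2 : ℂ) * log z + B * z ^ (1/2 : ℂ))
      ((log u + B + 2) / (2 * u ^ (1/2 : ℂ))) u := by
  have hu0 : u ≠ 0 := slitPlane_ne_zero hu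
  have hsqrt : HasDerivAt (fun z : ℂ => z ^ (1/2 : ℂ)) (1/2 * u ^ (1/2 : ℂ) / u) u := by
    simpa [cpow_sub _ _ hu0, mul_div_assoc] using (hasDerivAt_id u).cpow_const (c := 1/2) hu
  refine ((hsqrt.mul (hasDerivAt_log hu)).add (hsqrt.const_mul B)).congr_deriv ?_
  have hsq : u ^ (1/2 : ℂ) * u ^ (1/2 : ℂ) = u := by
    rw [← sq, one_div]; exact_mod_cast cpow_nat_inv_pow u two_ne_zero
  have hw0 : u ^ (1/2 : ℂ) ≠ 0 := by
    intro h; rw [h, zero_mul] at hsq; exact hu0 hsq.symm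
  field_simp
  linear_combination (log u + B + 2) * hsq

theorem HasDerivAt.re_comp_add_mul_I {F : ℂ → ℂ} {F' z : ℂ} {y : ℝ}
    (h : HasDerivAt F F' (z + y * I)) :
    HasDerivAt (fun s : ℝ => (F (z + s * I)).re) (-F'.im) y := by
  have hline : HasDerivAt (fun s : ℝ => z + s * I) I y := by
    simpa using ((hasDerivAt_id y).ofReal_comp.mul_const I).const_add z
  have h_re := reCLM.hasFDerivAt.comp_hasDerivAt y (h.scomp y hline)
  rwa [show reCLM (I • F') = -F'.im by simp] at h_re

theorem im_log_add_div_two_cpow_half_neg {B : ℝ} {u : ℂ} (hre : 0 < u.re) (him : 0 < u.im)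
    (hR : Real.exp (-B) ≤ ‖u‖) :
    ((log u + B + 2) / (2 * u ^ (1/2 : ℂ))).im < 0 := by
  have hu0 : u ≠ 0 := fun h ↦ by simp [h] at hre
  have hlog : 0 ≤ Real.log ‖u‖ + B := by
    linarith [(Real.le_log_iff_exp_le (norm_pos_iff.mpr hu0)).mpr hR]
  have hw_im : 0 ≤ (u ^ (1/2 : ℂ)).im := by
    rw [one_div, cpow_inv_two_im_eq_sqrt him.le]; exact Real.sqrt_nonneg _
  have hw0 : 2 * u ^ (1/2 : ℂ) ≠ 0 :=
    mul_ne_zero two_ne_zero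
      ((cpow_ne_zero_iff_of_exponent_ne_zero (one_div_ne_zero two_ne_zero)).mpr hu0)
  rw [div_im, ← sub_div, div_neg_iff]
  refine Or.inr ⟨?_, normSq_pos.mpr hw0⟩
  simp only [add_im, add_re, log_im, log_re, ofReal_im, ofReal_re, mul_re, mul_im]
  norm_num
  nlinarith [arg_mul_re_cpow_half_lt hre him, mul_nonneg hlog hw_im]

theorem norm_add_mul_I_le_of_le (x : ℝ) {s t : ℝ} (hs : 0 ≤ s) (hst : s ≤ t) :
    ‖(x : ℂ) + s * I‖ ≤ ‖(x : ℂ) + t * I‖ := by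
  simp only [norm_add_mul_I]
  gcongr

end Complex

/-- There is a radius `R` beyond which, in the right half-plane, the real part of
`√u · log u + B·√u` (principal branches) has positive derivative with respect to
`y = Im u` for `y > 0`, and is consequently increasing in `|Im u|`. -/
theorem re_sqrt_log_increasing (B : ℝ) :
    ∃ R > 0,
      (∀ x y : ℝ, 0 < x → 0 < y → R ≤ ‖(x + y * Complex.I : ℂ)‖ →
        0 < deriv (fun s : ℝ =>
          (((x : ℂ) + s * Complex.I) ^ (1/2 : ℂ) * Complex.log ((x : ℂ) + s * Complex.I)
            + (B : ℂ) * ((x : ℂ) + s * Complex.I) ^ (1/2 : ℂ)).re) y) ∧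
      (∀ x y₁ y₂ : ℝ, 0 < x → 0 < y₁ → y₁ < y₂ →
        R ≤ ‖(x + y₁ * Complex.I : ℂ)‖ →
        (((x : ℂ) + y₁ * Complex.I) ^ (1/2 : ℂ) * Complex.log ((x : ℂ) + y₁ * Complex.I)
            + (B : ℂ) * ((x : ℂ) + y₁ * Complex.I) ^ (1/2 : ℂ)).re <
        (((x : ℂ) + y₂ * Complex.I) ^ (1/2 : ℂ) * Complex.log ((x : ℂ) + y₂ * Complex.I)
            + (B : ℂ) * ((x : ℂ) + y₂ * Complex.I) ^ (1/2 : ℂ)).re) := by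
  have hderiv (x y : ℝ) (hx : 0 < x) := (hasDerivAt_cpow_half_mul_log_add (B : ℂ)
    (u := (x : ℂ) + y * I) (Or.inl (by simpa using hx))).re_comp_add_mul_I
  have hpos (x y : ℝ) (hx : 0 < x) (hy : 0 < y) (hR : Real.exp (-B) ≤ ‖(x + y * I : ℂ)‖) :=
    neg_pos.mpr (im_log_add_div_two_cpow_half_neg (by simpa using hx) (by simpa using hy) hR)
  refine ⟨Real.exp (-B), Real.exp_pos _, fun x y hx hy hR ↦ ?_, fun x y₁ y₂ hx hy₁ hy₁₂ hR ↦ ?_⟩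
  · rw [(hderiv x y hx).deriv]
    exact hpos x y hx hy hR
  · refine strictMonoOn_of_hasDerivWithinAt_pos (convex_Ici y₁)
      (fun s _ ↦ (hderiv x s hx).continuousAt.continuousWithinAt)
      (fun s _ ↦ (hderiv x s hx).hasDerivWithinAt) (fun s hs ↦ ?_)
      Set.self_mem_Ici (Set.mem_Ici.mpr hy₁₂.le) hy₁₂
    rw [interior_Ici] at hs
    exact hpos x s hx (hy₁.trans hs) (hR.trans (norm_add_mul_I_le_of_le x hy₁.le hs.le))
end

section
/- Fix ρ ∈ ℝ and let u₀(t) denote, for small t > 0, the largest solution of t = (log u)/(2√(2u)) − ρ/√(2u) + 1/(4u). Then u₀(t) = (log(1/t))²/(2t²) · (1 + 2·log log(1/t)/log(1/t) − (2ρ + log 2)/log(1/t) + o(1/log(1/t))) as t → 0⁺. -/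
/-!
With `v = √(2u)` and `c = ρ + (log 2)/2` the saddle point equation reads
`t v = log v - c + 1/(2v)`. The largest solution tends to infinity as `t → 0⁺`, since the
right-hand side of the original equation tends to `0` and is positive for large `u`. Writing
`w = t v` and `L = log(1/t)`, we get `log v = L + log w`, hence `w = L + log w - c + o(1)`.
This forces `w ~ L`, so `log w = log L + o(1)` and `w = L + log L - c + o(1)`; squaring,
`2 t² u = w² = L² (1 + 2(log L - c)/L + o(1/L))`.
-/

open Filter Real Asymptotics Topology

noncomputable def saddlePointFun (ρ u : ℝ) : ℝ :=
  log u / (2 * √(2 * u)) - ρ / √(2 * u) + 1 / (4 * u)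

theorem tendsto_atTop_of_isGreatest_preimage {f g : ℝ → ℝ} (hf : ContinuousOn f (Set.Ioi 0))
    (hf0 : Tendsto f atTop (𝓝 0)) (hpos : ∃ᶠ u in atTop, 0 < f u)
    (hg : ∀ᶠ t in 𝓝[>] 0, IsGreatest {u | 0 < u ∧ t = f u} (g t)) :
    Tendsto g (𝓝[>] 0) atTop := by
  refine tendsto_atTop.2 fun M => ?_
  obtain ⟨M₁, hM₁, hfM₁⟩ := hpos.forall_exists_of_atTop (max M 1)
  have hM₁0 : 0 < M₁ := zero_lt_one.trans_le (le_of_max_le_right hM₁)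
  filter_upwards [hg, self_mem_nhdsWithin, nhdsWithin_le_nhds (gt_mem_nhds hfM₁)]
    with t hgt (ht : 0 < t) htM₁
  obtain ⟨N, hfN, hN⟩ :=
    ((hf0.eventually (gt_mem_nhds ht)).and (eventually_ge_atTop M₁)).exists
  obtain ⟨u, hu, hfu⟩ := intermediate_value_Icc' hN
    (hf.mono fun x hx => hM₁0.trans_le hx.1) ⟨hfN.le, htM₁.le⟩
  calc M ≤ M₁ := le_of_max_le_left hM₁
    _ ≤ u := hu.1
    _ ≤ g t := hgt.2 ⟨hM₁0.trans_le hu.1, hfu.symm⟩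

theorem tendsto_sqrt_two_mul_atTop : Tendsto (fun u : ℝ => √(2 * u)) atTop atTop :=
  tendsto_sqrt_atTop.comp (tendsto_id.const_mul_atTop two_pos)

namespace saddlePointFun

variable (ρ : ℝ)

theorem eq_div_sqrt {u : ℝ} (hu : 0 < u) :
    saddlePointFun ρ u =
      (log √(2 * u) - (ρ + log 2 / 2) + 1 / (2 * √(2 * u))) / √(2 * u) := by
  have hv2 : √(2 * u) ^ 2 = 2 * u := sq_sqrt (by positivity)
  have hlog : log √(2 * u) = (log 2 + log u) / 2 := by
    rw [log_sqrt (by positivity), log_mul two_ne_zero hu.ne']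
  rw [saddlePointFun, hlog]
  field_simp
  linear_combination 2 * hv2

theorem mul_sqrt_eq {t u : ℝ} (hu : 0 < u) (ht : t = saddlePointFun ρ u) :
    t * √(2 * u) = log √(2 * u) - (ρ + log 2 / 2) + 1 / (2 * √(2 * u)) := by
  rw [ht, eq_div_sqrt ρ hu, div_mul_cancel₀ _ (by positivity)]

theorem continuousOn : ContinuousOn (saddlePointFun ρ) (Set.Ioi 0) := by
  intro u (hu : 0 < u)
  exact ContinuousAt.continuousWithinAt (by unfold saddlePointFun; fun_prop (disch := positivity))

theorem eventuallyEq_comp_sqrt :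
    saddlePointFun ρ =ᶠ[atTop]
      (fun v => (log v - (ρ + log 2 / 2) + 1 / (2 * v)) / v) ∘ fun u => √(2 * u) := by
  filter_upwards [eventually_gt_atTop 0] with u hu
  exact eq_div_sqrt ρ hu

theorem tendsto_atTop_zero : Tendsto (saddlePointFun ρ) atTop (𝓝 0) := by
  refine (Tendsto.comp ?_ tendsto_sqrt_two_mul_atTop).congr' (eventuallyEq_comp_sqrt ρ).symm
  have hlog : Tendsto (fun v => log v / v) atTop (𝓝 0) := by
    simpa using tendsto_pow_log_div_mul_add_atTop 1 0 1 one_ne_zero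
  have hrest : Tendsto (fun v : ℝ => (-(ρ + log 2 / 2) + 1 / (2 * v)) / v) atTop (𝓝 0) :=
    (tendsto_const_nhds.add (tendsto_const_nhds.div_atTop
      (tendsto_id.const_mul_atTop two_pos))).div_atTop tendsto_id
  simpa [add_div, sub_eq_add_neg, add_assoc] using hlog.add hrest

theorem eventually_pos : ∀ᶠ u in atTop, 0 < saddlePointFun ρ u := by
  have hv : ∀ᶠ v in atTop, 0 < (log v - (ρ + log 2 / 2) + 1 / (2 * v)) / v := by
    filter_upwards [tendsto_log_atTop.eventually_ge_atTop (ρ + log 2 / 2),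
      eventually_gt_atTop 0] with v hlog hv
    have : 0 < 1 / (2 * v) := by positivity
    exact div_pos (by linarith) hv
  filter_upwards [eventuallyEq_comp_sqrt ρ, tendsto_sqrt_two_mul_atTop.eventually hv]
    with u hu hpos
  rwa [hu]

end saddlePointFun

section Inversion

variable {α : Type*} {l : Filter α}

theorem tendsto_div_of_eq_add_log {w L r : α → ℝ} {c : ℝ} (hw : Tendsto w l atTop)
    (hr : Tendsto r l (𝓝 0)) (heq : ∀ᶠ x in l, w x = L x + log (w x) - c + r x) :
    Tendsto (fun x => L x / w x) l (𝓝 1) := by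
  have hlog : Tendsto (fun x => log (w x) / w x) l (𝓝 0) := by
    simpa [Function.comp_def] using (tendsto_pow_log_div_mul_add_atTop 1 0 1 one_ne_zero).comp hw
  have hrest : Tendsto (fun x => (c - r x) / w x) l (𝓝 0) :=
    (tendsto_const_nhds.sub hr).div_atTop hw
  have hlim := (tendsto_const_nhds (x := (1 : ℝ))).sub hlog |>.add hrest
  rw [sub_zero, add_zero] at hlim
  refine hlim.congr' ?_
  filter_upwards [heq, hw.eventually_gt_atTop 0] with x hx hwx
  rw [eq_div_iff hwx.ne']
  field_simp
  linarith

theorem tendsto_sub_log_of_eq_add_log {w L r : α → ℝ} {c : ℝ} (hw : Tendsto w l atTop)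
    (hr : Tendsto r l (𝓝 0)) (heq : ∀ᶠ x in l, w x = L x + log (w x) - c + r x) :
    Tendsto (fun x => w x - L x - log (L x) + c) l (𝓝 0) := by
  have hdiv := tendsto_div_of_eq_add_log hw hr heq
  have hlim := hr.sub ((continuousAt_log one_ne_zero).tendsto.comp hdiv)
  rw [log_one, sub_zero] at hlim
  refine hlim.congr' ?_
  filter_upwards [heq, hw.eventually_gt_atTop 0, hdiv.eventually (lt_mem_nhds one_pos)]
    with x hx hwx hLw
  have hLx : L x ≠ 0 := fun h => by simp [h] at hLw
  simp only [Function.comp_apply, log_div hLx hwx.ne']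
  linarith

theorem tendsto_sq_log_add_div {L b : α → ℝ} {β : ℝ} (hL : Tendsto L l atTop)
    (hb : Tendsto b l (𝓝 β)) : Tendsto (fun x => (log (L x) + b x) ^ 2 / L x) l (𝓝 0) := by
  have h1 : Tendsto (fun x => log (L x) ^ 2 / L x) l (𝓝 0) := by
    simpa [Function.comp_def] using (tendsto_pow_log_div_mul_add_atTop 1 0 2 one_ne_zero).comp hL
  have h2 : Tendsto (fun x => log (L x) / L x) l (𝓝 0) := by
    simpa [Function.comp_def] using (tendsto_pow_log_div_mul_add_atTop 1 0 1 one_ne_zero).comp hL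
  have hlim := (h1.add ((hb.const_mul 2).mul h2)).add ((hb.mul hb).div_atTop hL)
  rw [mul_zero, add_zero, add_zero] at hlim
  refine hlim.congr' ?_
  filter_upwards [hL.eventually_gt_atTop 0] with x hx
  field_simp
  ring

theorem isLittleO_sq_div_sub {w L : α → ℝ} {c : ℝ} (hL : Tendsto L l atTop)
    (hδ : Tendsto (fun x => w x - L x - log (L x) + c) l (𝓝 0)) :
    (fun x => (w x / L x) ^ 2 - (1 + 2 * log (L x) / L x - 2 * c / L x)) =o[l]
      (fun x => 1 / L x) := by
  rw [isLittleO_iff_tendsto' ((hL.eventually_gt_atTop 0).mono fun x hx h => by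
    simp [hx.ne'] at h)]
  -- the quotient equals `2 δ + (log L - c + δ)² / L`, where `δ = w - L - log L + c`
  have hsq := tendsto_sq_log_add_div hL ((tendsto_const_nhds (x := -c)).add hδ)
  have hlim := (hδ.const_mul 2).add hsq
  rw [mul_zero, add_zero] at hlim
  refine hlim.congr' ?_
  filter_upwards [hL.eventually_gt_atTop 0] with x hx
  field_simp
  ring

theorem isLittleO_of_mul_eq_log_add {t v r : α → ℝ} {c : ℝ} (hv : Tendsto v l atTop)
    (ht : ∀ᶠ x in l, 0 < t x) (hr : Tendsto r l (𝓝 0))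
    (heq : ∀ᶠ x in l, t x * v x = log (v x) - c + r x) :
    (fun x => (t x * v x / log (1 / t x)) ^ 2 -
        (1 + 2 * log (log (1 / t x)) / log (1 / t x) - 2 * c / log (1 / t x))) =o[l]
      (fun x => 1 / log (1 / t x)) := by
  have hw : Tendsto (fun x => t x * v x) l atTop := by
    refine ((tendsto_log_atTop.comp hv).atTop_add ((tendsto_const_nhds (x := -c)).add hr)).congr' ?_
    filter_upwards [heq] with x hx
    simp only [Function.comp_apply, hx]
    ring
  have heq' : ∀ᶠ x in l, t x * v x = log (1 / t x) + log (t x * v x) - c + r x := by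
    filter_upwards [heq, ht, hv.eventually_gt_atTop 0] with x hx htx hvx
    rw [log_mul htx.ne' hvx.ne', one_div, log_inv, hx]
    ring
  have hL : Tendsto (fun x => log (1 / t x)) l atTop := by
    refine ((tendsto_div_of_eq_add_log hw hr heq').pos_mul_atTop one_pos hw).congr' ?_
    filter_upwards [hw.eventually_gt_atTop 0] with x hx
    exact div_mul_cancel₀ _ hx.ne'
  exact isLittleO_sq_div_sub hL (tendsto_sub_log_of_eq_add_log hw hr heq')

end Inversion

/-- Expansion of the largest solution `u₀(t)` of the saddle point equation:
`u₀(t) = log(1/t)²/(2t²) (1 + 2 log log(1/t)/log(1/t) − (2ρ+log 2)/log(1/t) + o(1/log(1/t)))`. -/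
theorem saddle_point_expansion (ρ : ℝ) (u₀ : ℝ → ℝ)
    (h : ∀ᶠ t in nhdsWithin (0:ℝ) (Set.Ioi 0),
      IsGreatest {u : ℝ | 0 < u ∧
        t = Real.log u / (2 * Real.sqrt (2 * u)) - ρ / Real.sqrt (2 * u) + 1 / (4 * u)}
        (u₀ t)) :
    ∃ e : ℝ → ℝ,
      e =o[nhdsWithin (0:ℝ) (Set.Ioi 0)] (fun t => 1 / Real.log (1 / t)) ∧
      ∀ᶠ t in nhdsWithin (0:ℝ) (Set.Ioi 0),
        u₀ t = Real.log (1 / t) ^ 2 / (2 * t ^ 2) *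
          (1 + 2 * Real.log (Real.log (1 / t)) / Real.log (1 / t)
            - (2 * ρ + Real.log 2) / Real.log (1 / t) + e t) := by
  have hu : Tendsto u₀ (𝓝[>] 0) atTop :=
    tendsto_atTop_of_isGreatest_preimage (saddlePointFun.continuousOn ρ)
      (saddlePointFun.tendsto_atTop_zero ρ) (saddlePointFun.eventually_pos ρ).frequently h
  have hv : Tendsto (fun t => √(2 * u₀ t)) (𝓝[>] 0) atTop :=
    tendsto_sqrt_two_mul_atTop.comp hu
  have ht : ∀ᶠ t in 𝓝[>] (0 : ℝ), t ∈ Set.Ioo 0 1 := Ioo_mem_nhdsGT one_pos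
  have heq : ∀ᶠ t in 𝓝[>] 0, t * √(2 * u₀ t) =
      log √(2 * u₀ t) - (ρ + log 2 / 2) + 1 / (2 * √(2 * u₀ t)) := by
    filter_upwards [h] with t hg
    exact saddlePointFun.mul_sqrt_eq ρ hg.1.1 hg.1.2
  refine ⟨_, isLittleO_of_mul_eq_log_add hv (ht.mono fun t ht => ht.1)
    (tendsto_const_nhds.div_atTop (hv.const_mul_atTop two_pos)) heq, ?_⟩
  filter_upwards [ht, h] with t ⟨ht0, ht1⟩ hg
  have hL : 0 < log (1 / t) := log_pos (one_lt_one_div ht0 ht1)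
  rw [div_pow, mul_pow, sq_sqrt (by linarith [hg.1.1])]
  field_simp
  ring
end

section
/- Let M(t) = √2·log(u₀(t))/(16·u₀(t)^{3/2}) − √2·(1+ρ)/(8·u₀(t)^{3/2}), where u₀(t) is the largest solution of the saddle point equation t = (log u)/(2√(2u)) − ρ/√(2u) + 1/(4u). Then M(t) = t³/(2·(log(1/t))²)·(1 + O(log log(1/t)/log(1/t))) as t → 0⁺. -/
/-!
Write `L = log (1/t)`, `ℓ = log L` and `u₀ = L² / (2t²) · (1 + δ)`; the hypothesis says
`δ = O(ℓ / L)`, in particular `δ → 0`. Then `log u₀ = 2L + 2ℓ - log 2 + log (1 + δ)` and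
`u₀^{3/2} = L³ (1 + δ)^{3/2} / (2√2 t³)`, so the leading terms `2L` cancel against the prefactor
and `M(t) = t³ / (2L²) · (1 + (2ℓ + O(1)) / (2L)) · (1 + δ)^{-3/2}`. Both correction factors
are `1 + O(ℓ / L)`.
-/

open Filter Real Asymptotics Topology

section
variable {α : Type*} {l : Filter α}

theorem isBigO_rpow_one_add_sub_one {δ : α → ℝ} (hδ : Tendsto δ l (𝓝 0)) (a : ℝ) :
    (fun x => (1 + δ x) ^ a - 1) =O[l] δ := by
  have hd : HasDerivAt (fun y : ℝ => y ^ a) (a * 1 ^ (a - 1)) 1 :=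
    hasDerivAt_rpow_const (Or.inl one_ne_zero)
  have h1 : Tendsto (fun x => 1 + δ x) l (𝓝 1) := by simpa using hδ.const_add 1
  simpa [Function.comp_def] using hd.isBigO_sub.comp_tendsto h1

theorem isBigO_log_one_add {δ : α → ℝ} (hδ : Tendsto δ l (𝓝 0)) :
    (fun x => log (1 + δ x)) =O[l] δ := by
  have h1 : Tendsto (fun x => 1 + δ x) l (𝓝 1) := by simpa using hδ.const_add 1
  simpa [Function.comp_def] using (hasDerivAt_log one_ne_zero).isBigO_sub.comp_tendsto h1

variable {L : α → ℝ}

theorem tendsto_log_div_self_of_tendsto_atTop (hL : Tendsto L l atTop) :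
    Tendsto (fun x => log (L x) / L x) l (𝓝 0) :=
  isLittleO_log_id_atTop.tendsto_div_nhds_zero.comp hL

theorem isBigO_one_div_log_div_self (hL : Tendsto L l atTop) :
    (fun x => 1 / L x) =O[l] fun x => log (L x) / L x := by
  refine IsBigO.of_bound 1 ?_
  filter_upwards [hL.eventually_ge_atTop (exp 1)] with x hx
  have hL0 : 0 < L x := (exp_pos 1).trans_le hx
  have hlog : 1 ≤ log (L x) := by rwa [le_log_iff_exp_le hL0]
  rw [norm_div, norm_div, one_mul, norm_one, norm_of_nonneg (by linarith : 0 ≤ log (L x))]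
  gcongr

theorem isBigO_log_div_self_of_isLittleO (hL : Tendsto L l atTop) (a b : ℝ) {e : α → ℝ}
    (he : e =o[l] fun x => 1 / L x) :
    (fun x => a * log (L x) / L x - b / L x + e x) =O[l] fun x => log (L x) / L x := by
  have h1 := isBigO_one_div_log_div_self hL
  refine (((isBigO_refl _ l).const_mul_left a).sub (h1.const_mul_left b)).add
    (he.isBigO.trans h1) |>.congr_left fun x => ?_
  ring

theorem isBigO_log_add_log_one_add_div (hL : Tendsto L l atTop) (a b k : ℝ) {δ : α → ℝ}
    (hδ : Tendsto δ l (𝓝 0)) :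
    (fun x => (a * log (L x) + b + log (1 + δ x)) / (k * L x)) =O[l]
      fun x => log (L x) / L x := by
  have h1 := isBigO_one_div_log_div_self hL
  have hlog : Tendsto (fun x => log (1 + δ x)) l (𝓝 0) :=
    (isBigO_log_one_add hδ).trans_tendsto hδ
  have hlogL := ((hlog.isBigO_one ℝ).mul h1).congr_right fun x => one_mul _
  refine ((((isBigO_refl _ l).const_mul_left a).add
    ((h1.const_mul_left b).add hlogL)).const_mul_left k⁻¹).congr_left fun x => ?_
  field_simp
  ring

end

theorem tendsto_log_one_div_nhdsGT_zero :
    Tendsto (fun t : ℝ => log (1 / t)) (𝓝[>] 0) atTop := by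
  simpa only [one_div, Function.comp_def] using tendsto_log_atTop.comp tendsto_inv_nhdsGT_zero

theorem M_eq_of_u_eq {ρ t δ u : ℝ} (ht : 0 < t) (hL : 0 < log (1 / t)) (hδ : 0 < 1 + δ)
    (hu : u = log (1 / t) ^ 2 / (2 * t ^ 2) * (1 + δ)) :
    √2 * log u / (16 * u ^ (3 / 2 : ℝ)) - √2 * (1 + ρ) / (8 * u ^ (3 / 2 : ℝ)) =
      t ^ 3 / (2 * log (1 / t) ^ 2) *
        ((1 + (2 * log (log (1 / t)) + (-log 2 - 2 - 2 * ρ) + log (1 + δ)) / (2 * log (1 / t)))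
          * (1 + δ) ^ (-(3 / 2) : ℝ)) := by
  set L := log (1 / t) with hLdef
  have h2 : √2 ^ 2 = 2 := sq_sqrt zero_le_two
  have hlog : log u = 2 * L + 2 * log L - log 2 + log (1 + δ) := by
    have hlogt : log t = -L := by rw [hLdef, one_div, log_inv, neg_neg]
    rw [hu, log_mul (by positivity) hδ.ne', log_div (by positivity) (by positivity),
      log_mul two_ne_zero (by positivity), log_pow, log_pow, hlogt]
    push_cast; ring
  have hpow : u ^ (3 / 2 : ℝ) = L ^ 3 / (2 * √2 * t ^ 3) * (1 + δ) ^ (3 / 2 : ℝ) := by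
    have hsq : L ^ 2 / (2 * t ^ 2) = (L / (√2 * t)) ^ 2 := by rw [div_pow, mul_pow, h2]
    have hcube : (L / (√2 * t)) ^ 3 = L ^ 3 / (2 * √2 * t ^ 3) := by
      rw [div_pow, mul_pow, pow_succ √2 2, h2]
    rw [hu, hsq, mul_rpow (by positivity) hδ.le, ← hcube, ← rpow_natCast,
      ← rpow_mul (by positivity)]
    norm_num
  have hpos : 0 < (1 + δ) ^ (3 / 2 : ℝ) := rpow_pos_of_pos hδ _
  rw [hlog, hpow, rpow_neg hδ.le]
  field_simp
  ring_nf
  rw [h2]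
  ring

theorem M_expansion_general (ρ : ℝ) (u₀ : ℝ → ℝ)
    (hexp : ∃ e : ℝ → ℝ,
      e =o[nhdsWithin (0:ℝ) (Set.Ioi 0)] (fun t => 1 / Real.log (1 / t)) ∧
      ∀ᶠ t in nhdsWithin (0:ℝ) (Set.Ioi 0),
        u₀ t = Real.log (1 / t) ^ 2 / (2 * t ^ 2) *
          (1 + 2 * Real.log (Real.log (1 / t)) / Real.log (1 / t)
            - (2 * ρ + Real.log 2) / Real.log (1 / t) + e t)) :
    ∃ E : ℝ → ℝ,
      E =O[nhdsWithin (0:ℝ) (Set.Ioi 0)]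
        (fun t => Real.log (Real.log (1 / t)) / Real.log (1 / t)) ∧
      ∀ᶠ t in nhdsWithin (0:ℝ) (Set.Ioi 0),
        Real.sqrt 2 * Real.log (u₀ t) / (16 * (u₀ t) ^ ((3:ℝ)/2))
            - Real.sqrt 2 * (1 + ρ) / (8 * (u₀ t) ^ ((3:ℝ)/2)) =
          t ^ 3 / (2 * Real.log (1 / t) ^ 2) * (1 + E t) := by
  obtain ⟨e, he, hu⟩ := hexp
  have hL := tendsto_log_one_div_nhdsGT_zero
  set δ := fun t => 2 * log (log (1 / t)) / log (1 / t) - (2 * ρ + log 2) / log (1 / t) + e t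
  have hδ : δ =O[𝓝[>] 0] fun t => log (log (1 / t)) / log (1 / t) :=
    isBigO_log_div_self_of_isLittleO hL 2 (2 * ρ + log 2) he
  have hδ0 : Tendsto δ (𝓝[>] 0) (𝓝 0) :=
    hδ.trans_tendsto (tendsto_log_div_self_of_tendsto_atTop hL)
  have hη := isBigO_log_add_log_one_add_div hL 2 (-log 2 - 2 - 2 * ρ) 2 hδ0
  have hg : Tendsto (fun t => (1 + δ t) ^ (-(3 / 2) : ℝ)) (𝓝[>] 0) (𝓝 1) := by
    simpa using (hδ0.const_add 1).rpow_const (Or.inl (by norm_num))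
  refine ⟨fun t => (1 + (2 * log (log (1 / t)) + (-log 2 - 2 - 2 * ρ) + log (1 + δ t))
    / (2 * log (1 / t))) * (1 + δ t) ^ (-(3 / 2) : ℝ) - 1, ?_, ?_⟩
  · refine ((isBigO_rpow_one_add_sub_one hδ0 (-(3 / 2))).trans hδ |>.add
      ((hη.mul (hg.isBigO_one ℝ)).congr_right fun t => mul_one _)).congr_left fun t => ?_
    ring
  · filter_upwards [self_mem_nhdsWithin, hL.eventually_gt_atTop 0,
      hδ0.eventually (eventually_gt_nhds (by norm_num : (-1 : ℝ) < 0)), hu] with t ht hLt hδt hut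
    rw [add_sub_cancel]
    exact M_eq_of_u_eq (δ := δ t) ht hLt (by linarith) (hut.trans (by simp only [δ]; ring))

/-- Expansion of `M(t) = √2 log(u₀(t))/(16 u₀(t)^{3/2}) − √2(1+ρ)/(8 u₀(t)^{3/2})`:
`M(t) = t³/(2 log(1/t)²)(1 + O(log log(1/t)/log(1/t)))` as `t → 0⁺`. -/
theorem M_expansion (ρ : ℝ) (u₀ : ℝ → ℝ)
    (hgr : ∀ᶠ t in nhdsWithin (0:ℝ) (Set.Ioi 0),
      IsGreatest {u : ℝ | 0 < u ∧
        t = Real.log u / (2 * Real.sqrt (2 * u)) - ρ / Real.sqrt (2 * u) + 1 / (4 * u)}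
        (u₀ t))
    (hexp : ∃ e : ℝ → ℝ,
      e =o[nhdsWithin (0:ℝ) (Set.Ioi 0)] (fun t => 1 / Real.log (1 / t)) ∧
      ∀ᶠ t in nhdsWithin (0:ℝ) (Set.Ioi 0),
        u₀ t = Real.log (1 / t) ^ 2 / (2 * t ^ 2) *
          (1 + 2 * Real.log (Real.log (1 / t)) / Real.log (1 / t)
            - (2 * ρ + Real.log 2) / Real.log (1 / t) + e t)) :
    ∃ E : ℝ → ℝ,
      E =O[nhdsWithin (0:ℝ) (Set.Ioi 0)]
        (fun t => Real.log (Real.log (1 / t)) / Real.log (1 / t)) ∧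
      ∀ᶠ t in nhdsWithin (0:ℝ) (Set.Ioi 0),
        Real.sqrt 2 * Real.log (u₀ t) / (16 * (u₀ t) ^ ((3:ℝ)/2))
            - Real.sqrt 2 * (1 + ρ) / (8 * (u₀ t) ^ ((3:ℝ)/2)) =
          t ^ 3 / (2 * Real.log (1 / t) ^ 2) * (1 + E t) :=
  M_expansion_general ρ u₀ hexp
end
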